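/- arXiv:2105.08225 — 2 statements merged into one kernel-verified Lean document; each statement's English description precedes it below -/
import Mathlib

section
/- For r ≥ 2, the r-dynamic chromatic number of the cycle C_p equals 5 if p = 5, equals 3 if p ≡ 0 (mod 3) and p ≠ 5, and equals 4 otherwise. -/
open SimpleGraph

/-- Lexicographic product of simple graphs. -/
def SimpleGraph.lexProd {α β : Type*} (G₁ : SimpleGraph α) (G₂ : SimpleGraph β) :
    SimpleGraph (α × β) where
  Adj x y := G₁.Adj x.1 y.1 ∨ (x.1 = y.1 ∧ G₂.Adj x.2 y.2)
  symm := by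
    refine ⟨?_⟩
    rintro x y (h | ⟨h1, h2⟩)
    · exact Or.inl h.symm
    · exact Or.inr ⟨h1.symm, h2.symm⟩
  loopless := by
    refine ⟨?_⟩
    rintro x (h | ⟨-, h⟩)
    · exact G₁.irrefl h
    · exact G₂.irrefl h

/-- `c` is a proper coloring such that each vertex `v` sees at least
`min r (deg v)` distinct colors among its neighbors. -/
def SimpleGraph.IsRDynamicColoring {α : Type*} (G : SimpleGraph α) (r : ℕ) (c : α → ℕ) : Prop :=
  (∀ u v, G.Adj u v → c u ≠ c v) ∧
  ∀ v, min r (G.neighborSet v).ncard ≤ (c '' G.neighborSet v).ncard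

/-- The `r`-dynamic chromatic number: least `k` such that there is an
`r`-dynamic coloring with colors in `{0, …, k-1}`. -/
noncomputable def SimpleGraph.rDynChromaticNumber {α : Type*} (G : SimpleGraph α) (r : ℕ) : ℕ :=
  sInf {k | ∃ c : α → ℕ, G.IsRDynamicColoring r c ∧ ∀ v, c v < k}

/-- Maximum degree (via `Set.ncard` of neighbor sets). -/
noncomputable def SimpleGraph.maxDeg {α : Type*} (G : SimpleGraph α) : ℕ :=
  sSup (Set.range fun v => (G.neighborSet v).ncard)

/-- Minimum degree (via `Set.ncard` of neighbor sets). -/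
noncomputable def SimpleGraph.minDeg {α : Type*} (G : SimpleGraph α) : ℕ :=
  sInf (Set.range fun v => (G.neighborSet v).ncard)

/-- The star `K_{1,m}`: center `0` adjacent to the `m` leaves. -/
def starGraph (m : ℕ) : SimpleGraph (Fin (m + 1)) :=
  SimpleGraph.fromRel (fun i _ => i = 0)

/-- The double star `K_{1,m,m}`: center `0`, middle vertices `1,…,m`,
outer leaf `i + m` attached to middle vertex `i`. -/
def doubleStarGraph (m : ℕ) : SimpleGraph (Fin (2 * m + 1)) :=
  SimpleGraph.fromRel (fun i j =>
    ((i : ℕ) = 0 ∧ 1 ≤ (j : ℕ) ∧ (j : ℕ) ≤ m) ∨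
    (1 ≤ (i : ℕ) ∧ (i : ℕ) ≤ m ∧ (j : ℕ) = (i : ℕ) + m))

/-- The triple star `K_{1,m,m,m}`: center `0`, middle vertices `1,…,m`,
vertex `i + m` attached to `i` for `1 ≤ i ≤ 2m`. -/
def tripleStarGraph (m : ℕ) : SimpleGraph (Fin (3 * m + 1)) :=
  SimpleGraph.fromRel (fun i j =>
    ((i : ℕ) = 0 ∧ 1 ≤ (j : ℕ) ∧ (j : ℕ) ≤ m) ∨
    (1 ≤ (i : ℕ) ∧ (i : ℕ) ≤ 2 * m ∧ (j : ℕ) = (i : ℕ) + m))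


/-! For `r ≥ 2` every vertex of `C_p` has degree two, so an `r`-dynamic coloring of `C_p` is
exactly a coloring in which vertices at distance at most two differ, i.e. a proper coloring of
the square `C_p²`. Three consecutive vertices are pairwise at distance at most two, so three colors
are needed; a coloring with exactly three colors is forced to be `3`-periodic, which closes up
around the cycle only when `3 ∣ p`, and then `i ↦ i % 3` works. `C_5² = K_5` needs five colors.
Every other `p ≥ 3` is `3a + 4b`, and blocks `012…012 0123…0123` give a coloring with four. -/

lemma Nat.exists_eq_three_mul_add_four_mul {n : ℕ} (hn : 3 ≤ n) (h5 : n ≠ 5) :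
    ∃ a b, n = 3 * a + 4 * b := by
  rcases (by omega : n % 3 = 0 ∨ n % 3 = 1 ∨ n % 3 = 2) with h | h | h
  · exact ⟨n / 3, 0, by omega⟩
  · exact ⟨(n - 4) / 3, 1, by omega⟩
  · exact ⟨(n - 8) / 3, 2, by omega⟩

open scoped Fin.CommRing

namespace SimpleGraph

def IsCycleSqColoring {n : ℕ} [NeZero n] (c : Fin n → ℕ) : Prop :=
  ∀ v, c v ≠ c (v + 1) ∧ c v ≠ c (v + 2)

lemma cycleGraph_isRDynamicColoring_iff {n r : ℕ} (hr : 2 ≤ r) (c : Fin (n + 3) → ℕ) :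
    (cycleGraph (n + 3)).IsRDynamicColoring r c ↔ IsCycleSqColoring c := by
  have hsep (v : Fin (n + 3)) : v - 1 ≠ v + 1 := by
    intro h
    have h2 : (2 : Fin (n + 3)) = 0 := by linear_combination -h
    simp [Fin.ext_iff, Nat.mod_eq_of_lt] at h2
  simp only [IsRDynamicColoring, cycleGraph_neighborSet, Set.image_insert_eq,
    Set.image_singleton, Set.ncard_pair (hsep _)]
  constructor
  · rintro ⟨hproper, hdyn⟩ v
    refine ⟨hproper _ _ (by simp [cycleGraph_adj]), fun h => ?_⟩
    have := hdyn (v + 1)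
    rw [add_sub_cancel_right, add_assoc, one_add_one_eq_two, h, Set.pair_eq_singleton,
      Set.ncard_singleton] at this
    omega
  · intro hc
    refine ⟨fun u v huv => ?_, fun v => ?_⟩
    · rcases cycleGraph_adj.1 huv with h | h
      · rw [sub_eq_iff_eq_add'] at h
        exact h ▸ ((hc v).1).symm
      · rw [sub_eq_iff_eq_add'] at h
        exact h ▸ (hc u).1
    · have h := (hc (v - 1)).2
      rw [show v - 1 + 2 = v + 1 by ring] at h
      rw [Set.ncard_pair h]
      omega

lemma rDynChromaticNumber_cycleGraph_eq {n r k : ℕ} (hr : 2 ≤ r)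
    (hcol : ∃ c : Fin (n + 3) → ℕ, IsCycleSqColoring c ∧ ∀ v, c v < k)
    (hmin : ∀ (c : Fin (n + 3) → ℕ) (k' : ℕ), IsCycleSqColoring c → (∀ v, c v < k') → k ≤ k') :
    (cycleGraph (n + 3)).rDynChromaticNumber r = k := by
  simp only [rDynChromaticNumber, cycleGraph_isRDynamicColoring_iff hr]
  refine IsLeast.csInf_eq ⟨hcol, ?_⟩
  rintro k' ⟨c, hc, hk'⟩
  exact hmin c k' hc hk'

namespace IsCycleSqColoring

variable {n k : ℕ} {c : Fin n → ℕ}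

lemma three_le [NeZero n] (hc : IsCycleSqColoring c) (hk : ∀ v, c v < k) : 3 ≤ k := by
  have h01 := (hc 0).1
  have h02 := (hc 0).2
  have h12 := (hc 1).1
  rw [zero_add] at h01 h02
  rw [one_add_one_eq_two] at h12
  have := hk 0; have := hk 1; have := hk 2
  omega

lemma add_three_of_lt_three [NeZero n] (hc : IsCycleSqColoring c) (hk : ∀ v, c v < 3)
    (v : Fin n) : c (v + 3) = c v := by
  have h₀ := hc v
  have h₁ := hc (v + 1)
  have h₂ := (hc (v + 2)).1
  rw [add_assoc, add_assoc, one_add_one_eq_two, show (1 : Fin n) + 2 = 3 by norm_num] at h₁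
  rw [add_assoc, show (2 : Fin n) + 1 = 3 by norm_num] at h₂
  have := hk v; have := hk (v + 1); have := hk (v + 2); have := hk (v + 3)
  omega

lemma four_le [NeZero n] (hn : ¬ 3 ∣ n) (hc : IsCycleSqColoring c) (hk : ∀ v, c v < k) :
    4 ≤ k := by
  by_contra! hk3
  have hper : Function.Periodic c 3 :=
    hc.add_three_of_lt_three fun v => (hk v).trans_le (by have := hc.three_le hk; omega)
  have hn1 : 1 < n := by
    by_contra! h
    have : Subsingleton (Fin n) := Fin.subsingleton_iff_le_one.2 h
    exact (hc 0).1 (congrArg c (Subsingleton.elim _ _))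
  -- `3` is a unit modulo `n`, so `c` is also `1`-periodic.
  obtain ⟨m, -, hm⟩ := Nat.exists_mul_mod_eq_one_of_coprime
    ((Nat.Prime.coprime_iff_not_dvd Nat.prime_three).2 hn) hn1
  have h1 : (m : Fin n) * 3 = 1 := by
    have : ((3 * m : ℕ) : Fin n) = 1 :=
      Fin.ext (by rw [Fin.val_natCast, hm, Fin.val_one', Nat.mod_eq_of_lt hn1])
    rw [mul_comm]
    exact_mod_cast this
  have := (hper.nat_mul m) 0
  rw [h1, zero_add] at this
  exact (hc 0).1 (by simpa using this.symm)

lemma five_le {c : Fin 5 → ℕ} (hc : IsCycleSqColoring c) (hk : ∀ v, c v < k) : 5 ≤ k := by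
  have hclose : ∀ u v : Fin 5, u ≠ v → v = u + 1 ∨ v = u + 2 ∨ u = v + 1 ∨ u = v + 2 := by
    decide
  have hinj : Function.Injective c := by
    intro u v huv
    by_contra hne
    rcases hclose u v hne with rfl | rfl | rfl | rfl
    exacts [(hc u).1 huv, (hc u).2 huv, (hc v).1 huv.symm, (hc v).2 huv.symm]
  simpa using Fintype.card_le_of_injective (fun v => (⟨c v, hk v⟩ : Fin k))
    fun u v h => hinj (congrArg Fin.val h)

end IsCycleSqColoring

lemma isCycleSqColoring_comp_val {n : ℕ} [NeZero n] (hn : 3 ≤ n) {f : ℕ → ℕ}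
    (hf : ∀ i j, i < n → j < n → (j = i + 1 ∨ j = i + 2 ∨ j + n = i + 1 ∨ j + n = i + 2) →
      f i ≠ f j) :
    IsCycleSqColoring fun v : Fin n => f v := by
  have h1 : ((1 : Fin n) : ℕ) = 1 := (Nat.mod_eq_of_lt (by omega) : 1 % n = 1)
  have h2 : ((2 : Fin n) : ℕ) = 2 := (Nat.mod_eq_of_lt (by omega) : 2 % n = 2)
  intro v
  constructor <;>
  · refine hf _ _ v.isLt (Fin.isLt _) ?_
    simp only [Fin.val_add_eq_ite, h1, h2]
    split_ifs <;> omega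

lemma isCycleSqColoring_mod_three {n : ℕ} [NeZero n] (hn : 3 ∣ n) :
    IsCycleSqColoring fun v : Fin n => (v : ℕ) % 3 :=
  isCycleSqColoring_comp_val (f := (· % 3)) (Nat.le_of_dvd (Nat.pos_of_neZero n) hn) (by omega)

lemma isCycleSqColoring_three_four {n a b : ℕ} [NeZero n] (hn : 3 ≤ n)
    (hab : n = 3 * a + 4 * b) :
    IsCycleSqColoring fun v : Fin n =>
      if (v : ℕ) < 3 * a then (v : ℕ) % 3 else ((v : ℕ) - 3 * a) % 4 :=
  isCycleSqColoring_comp_val (f := fun i => if i < 3 * a then i % 3 else (i - 3 * a) % 4) hn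
    fun i j hi hj hij => by split_ifs <;> omega

end SimpleGraph

theorem stmt_3 (r p : ℕ) (hr : 2 ≤ r) (hp : 3 ≤ p) :
    (SimpleGraph.cycleGraph p).rDynChromaticNumber r =
      if p = 5 then 5 else if p % 3 = 0 then 3 else 4 := by
  obtain ⟨n, rfl⟩ : ∃ n, p = n + 3 := ⟨p - 3, by omega⟩
  split_ifs with h5 h3
  · obtain rfl : n = 2 := by omega
    exact rDynChromaticNumber_cycleGraph_eq hr
      ⟨_, isCycleSqColoring_comp_val (f := fun i => i) (by norm_num) (by omega), Fin.isLt⟩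
      fun _ _ hc hk => hc.five_le hk
  · exact rDynChromaticNumber_cycleGraph_eq hr
      ⟨_, isCycleSqColoring_mod_three (by omega), fun _ => Nat.mod_lt _ (by norm_num)⟩
      fun _ _ hc hk => hc.three_le hk
  · obtain ⟨a, b, hab⟩ := Nat.exists_eq_three_mul_add_four_mul hp h5
    exact rDynChromaticNumber_cycleGraph_eq hr
      ⟨_, isCycleSqColoring_three_four hp hab, fun _ => by split_ifs <;> omega⟩
      fun _ _ hc hk => hc.four_le (by omega) hk
end

section
/- For integers l ≥ 2 and m ≥ 3, and every r with 1 ≤ r ≤ 3, the r-dynamic chromatic number of the lexicographic product P_l[K_{1,m,m}] of the path on l vertices with the double star equals 4. -/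
open SimpleGraph

/-!
An edge `x ~ x'` of the path and the edge `0 ~ 1` of the double star span a `K₄` in the
lexicographic product, so already a proper colouring needs four colours. Conversely, colour
`(x, y)` by `2 * (x mod 2) + side(y)`, where `side` is a 2-colouring of the bipartite double star.
This is proper, and as neither factor has isolated vertices, every vertex `(x, y)` sees three
distinct colours, at `(x', y)`, `(x', y')` and `(x, y')` for neighbours `x' ~ x`, `y' ~ y`.
-/

theorem Nat.eq_and_eq_of_mul_add_eq_mul_add {q a a' b b' : ℕ} (hb : b < q) (hb' : b' < q)
    (h : q * a + b = q * a' + b') : a = a' ∧ b = b' := by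
  have hq : 0 < q := by omega
  have ha : a = a' := by
    simpa [Nat.mul_add_div hq, Nat.div_eq_of_lt hb, Nat.div_eq_of_lt hb'] using
      congrArg (· / q) h
  subst ha
  exact ⟨rfl, by omega⟩

namespace SimpleGraph

variable {α β : Type*}

theorem colorable_of_forall_lt {G : SimpleGraph α} {c : α → ℕ} {k : ℕ}
    (hc : ∀ u v, G.Adj u v → c u ≠ c v) (hk : ∀ v, c v < k) : G.Colorable k :=
  ⟨Coloring.mk (fun v => ⟨c v, hk v⟩) fun h e => hc _ _ h (congrArg Fin.val e)⟩

theorem rDynChromaticNumber_eq_of_isClique {G : SimpleGraph α} {r : ℕ} {s : Finset α}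
    (hs : G.IsClique s) {c : α → ℕ} (hc : G.IsRDynamicColoring r c) (hcs : ∀ v, c v < s.card) :
    G.rDynChromaticNumber r = s.card := by
  have hmem : s.card ∈ {k | ∃ c : α → ℕ, G.IsRDynamicColoring r c ∧ ∀ v, c v < k} :=
    ⟨c, hc, hcs⟩
  refine le_antisymm (Nat.sInf_le hmem) (le_csInf ⟨_, hmem⟩ ?_)
  rintro k ⟨c', ⟨hproper, -⟩, hk⟩
  exact hs.card_le_of_colorable (colorable_of_forall_lt hproper hk)

section lexProd

variable {G₁ : SimpleGraph α} {G₂ : SimpleGraph β}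

theorem IsClique.lexProd {s : Set α} {t : Set β} (hs : G₁.IsClique s) (ht : G₂.IsClique t) :
    (G₁.lexProd G₂).IsClique (s ×ˢ t) := by
  rintro ⟨x, y⟩ ⟨hx, hy⟩ ⟨x', y'⟩ ⟨hx', hy'⟩ hne
  by_cases hxx : x = x'
  · subst hxx
    exact Or.inr ⟨rfl, ht hy hy' fun h => hne (Prod.ext rfl h)⟩
  · exact Or.inl (hs hx hx' hxx)

def lexColoring (q : ℕ) (c₁ : α → ℕ) (c₂ : β → ℕ) (p : α × β) : ℕ :=
  q * c₁ p.1 + c₂ p.2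

theorem lexColoring_lt {p q : ℕ} {c₁ : α → ℕ} {c₂ : β → ℕ} (hp : ∀ x, c₁ x < p)
    (hq : ∀ y, c₂ y < q) (v : α × β) : lexColoring q c₁ c₂ v < p * q :=
  calc q * c₁ v.1 + c₂ v.2
      < q * (c₁ v.1 + 1) := by rw [mul_add_one]; exact Nat.add_lt_add_left (hq _) _
    _ ≤ q * p := Nat.mul_le_mul_left _ (hp _)
    _ = p * q := mul_comm _ _

theorem lexColoring_ne_of_adj {q : ℕ} {c₁ : α → ℕ} {c₂ : β → ℕ}
    (hc₁ : ∀ u v, G₁.Adj u v → c₁ u ≠ c₁ v) (hc₂ : ∀ u v, G₂.Adj u v → c₂ u ≠ c₂ v)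
    (hq : ∀ y, c₂ y < q) {u v : α × β} (h : (G₁.lexProd G₂).Adj u v) :
    lexColoring q c₁ c₂ u ≠ lexColoring q c₁ c₂ v := by
  intro e
  obtain ⟨h₁, h₂⟩ := Nat.eq_and_eq_of_mul_add_eq_mul_add (hq _) (hq _) e
  rcases h with h | ⟨-, h⟩
  · exact hc₁ _ _ h h₁
  · exact hc₂ _ _ h h₂

theorem three_le_ncard_lexColoring_image_neighborSet [Finite α] [Finite β] {q : ℕ}
    {c₁ : α → ℕ} {c₂ : β → ℕ}
    (hc₁ : ∀ u v, G₁.Adj u v → c₁ u ≠ c₁ v) (hc₂ : ∀ u v, G₂.Adj u v → c₂ u ≠ c₂ v)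
    (hq : ∀ y, c₂ y < q) {x : α} {y : β} (hx : ∃ x', G₁.Adj x x') (hy : ∃ y', G₂.Adj y y') :
    3 ≤ (lexColoring q c₁ c₂ '' (G₁.lexProd G₂).neighborSet (x, y)).ncard := by
  obtain ⟨x', hxx'⟩ := hx
  obtain ⟨y', hyy'⟩ := hy
  set c := lexColoring q c₁ c₂
  have hne (u v : α × β) (h : (G₁.lexProd G₂).Adj u v) : c u ≠ c v :=
    lexColoring_ne_of_adj hc₁ hc₂ hq h
  have hsub : ({c (x', y), c (x', y'), c (x, y')} : Set ℕ) ⊆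
      c '' (G₁.lexProd G₂).neighborSet (x, y) := by
    rintro _ (rfl | rfl | rfl)
    · exact ⟨(x', y), Or.inl hxx', rfl⟩
    · exact ⟨(x', y'), Or.inl hxx', rfl⟩
    · exact ⟨(x, y'), Or.inr ⟨rfl, hyy'⟩, rfl⟩
  calc 3 = ({c (x', y), c (x', y'), c (x, y')} : Set ℕ).ncard :=
        (Set.ncard_eq_three.2 ⟨_, _, _, hne (x', y) (x', y') (Or.inr ⟨rfl, hyy'⟩),
          hne (x', y) (x, y') (Or.inl hxx'.symm), hne (x', y') (x, y') (Or.inl hxx'.symm),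
          rfl⟩).symm
    _ ≤ _ := Set.ncard_le_ncard hsub (Set.toFinite _)

end lexProd

section pathGraph

variable {l : ℕ}

theorem pathGraph_adj_mod_two_ne {i j : Fin l} (h : (pathGraph l).Adj i j) :
    i.val % 2 ≠ j.val % 2 := by
  rw [pathGraph_adj] at h
  omega

theorem pathGraph_exists_adj (hl : 2 ≤ l) (i : Fin l) : ∃ j, (pathGraph l).Adj i j := by
  by_cases h : i.val + 1 < l
  · exact ⟨⟨i.val + 1, h⟩, pathGraph_adj.2 (Or.inl rfl)⟩
  · exact ⟨⟨i.val - 1, by omega⟩, pathGraph_adj.2 (Or.inr (by dsimp only; omega))⟩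

end pathGraph

end SimpleGraph

section doubleStarGraph

variable {m : ℕ}

def doubleStarSide (m : ℕ) (j : Fin (2 * m + 1)) : ℕ :=
  if 1 ≤ j.val ∧ j.val ≤ m then 1 else 0

theorem doubleStarSide_lt_two (j : Fin (2 * m + 1)) : doubleStarSide m j < 2 := by
  unfold doubleStarSide
  split_ifs <;> omega

theorem doubleStarGraph_adj_iff {i j : Fin (2 * m + 1)} :
    (doubleStarGraph m).Adj i j ↔ i ≠ j ∧
      ((i.val = 0 ∧ 1 ≤ j.val ∧ j.val ≤ m) ∨ (1 ≤ i.val ∧ i.val ≤ m ∧ j.val = i.val + m) ∨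
        (j.val = 0 ∧ 1 ≤ i.val ∧ i.val ≤ m) ∨ (1 ≤ j.val ∧ j.val ≤ m ∧ i.val = j.val + m)) := by
  simp only [doubleStarGraph, SimpleGraph.fromRel_adj, or_assoc]

theorem doubleStarSide_ne_of_adj {i j : Fin (2 * m + 1)} (h : (doubleStarGraph m).Adj i j) :
    doubleStarSide m i ≠ doubleStarSide m j := by
  rw [doubleStarGraph_adj_iff] at h
  unfold doubleStarSide
  split_ifs <;> omega

theorem doubleStarGraph_adj_zero_one (hm : 1 ≤ m) :
    (doubleStarGraph m).Adj ⟨0, by omega⟩ ⟨1, by omega⟩ := by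
  rw [doubleStarGraph_adj_iff]
  exact ⟨by simp, Or.inl ⟨rfl, le_rfl, hm⟩⟩

theorem doubleStarGraph_exists_adj (hm : 1 ≤ m) (j : Fin (2 * m + 1)) :
    ∃ w, (doubleStarGraph m).Adj j w := by
  simp only [doubleStarGraph_adj_iff, ne_eq, Fin.ext_iff]
  by_cases h0 : j.val = 0
  · exact ⟨⟨1, by omega⟩, by dsimp only; omega⟩
  by_cases h1 : j.val ≤ m
  · exact ⟨⟨0, by omega⟩, by dsimp only; omega⟩
  · exact ⟨⟨j.val - m, by omega⟩, by dsimp only; omega⟩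

end doubleStarGraph

theorem stmt_11_general (l m r : ℕ) (hl : 2 ≤ l) (hm : 3 ≤ m) (hr3 : r ≤ 3) :
    ((SimpleGraph.pathGraph l).lexProd (doubleStarGraph m)).rDynChromaticNumber r = 4 := by
  have hm1 : 1 ≤ m := by omega
  let s : Finset (Fin l × Fin (2 * m + 1)) :=
    {⟨0, by omega⟩, ⟨1, by omega⟩} ×ˢ {⟨0, by omega⟩, ⟨1, by omega⟩}
  have hs : ((pathGraph l).lexProd (doubleStarGraph m)).IsClique s := by
    rw [Finset.coe_product, Finset.coe_pair, Finset.coe_pair]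
    exact (isClique_pair.2 fun _ => pathGraph_adj.2 (Or.inl rfl)).lexProd
      (isClique_pair.2 fun _ => doubleStarGraph_adj_zero_one hm1)
  have hcard : s.card = 2 * 2 := by
    rw [Finset.card_product, Finset.card_pair (by simp), Finset.card_pair (by simp)]
  have hc₁ : ∀ u v : Fin l, (pathGraph l).Adj u v → u.val % 2 ≠ v.val % 2 :=
    fun _ _ => pathGraph_adj_mod_two_ne
  have hc₂ : ∀ u v, (doubleStarGraph m).Adj u v → doubleStarSide m u ≠ doubleStarSide m v :=
    fun _ _ => doubleStarSide_ne_of_adj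
  have hdynamic : ((pathGraph l).lexProd (doubleStarGraph m)).IsRDynamicColoring r
      (lexColoring 2 (fun i : Fin l => i.val % 2) (doubleStarSide m)) :=
    ⟨fun _ _ => lexColoring_ne_of_adj hc₁ hc₂ doubleStarSide_lt_two, fun v =>
      (min_le_left _ _).trans <| hr3.trans <| three_le_ncard_lexColoring_image_neighborSet hc₁ hc₂
        doubleStarSide_lt_two (pathGraph_exists_adj hl v.1) (doubleStarGraph_exists_adj hm1 v.2)⟩
  rw [rDynChromaticNumber_eq_of_isClique hs hdynamic
    (hcard ▸ lexColoring_lt (fun _ => Nat.mod_lt _ two_pos) doubleStarSide_lt_two), hcard]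

theorem stmt_11 (l m r : ℕ) (hl : 2 ≤ l) (hm : 3 ≤ m) (hr1 : 1 ≤ r) (hr3 : r ≤ 3) :
    ((SimpleGraph.pathGraph l).lexProd (doubleStarGraph m)).rDynChromaticNumber r = 4 :=
  stmt_11_general l m r hl hm hr3
end
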